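/- arXiv:1301.1815 — 6 statements merged into one kernel-verified Lean document; each statement's English description precedes it below -/
import Mathlib

section
/- Let k be a field, let d ≥ 1 be an integer, and let L/k be an algebraic field extension that is generated over k by its elements of degree at most d over k. Then every k-algebra automorphism σ of L satisfies σ^(d!) = id; in particular, the automorphism group Aut_k(L) has exponent dividing d!. (This is the paper's claim that the Galois group Gal(K(B)^{(d)}/K(B)) of the compositum K(B)^{(d)} of all finite extensions of K(B) of degree ≤ d has exponent at most d!.) -/
/-- If `L/k` is an algebraic field extension generated over `k` by its
elements of degree at most `d` over `k`, then every `k`-algebra automorphism `σ` of `L`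
satisfies `σ ^ d! = 1`; in particular `Aut_k(L)` has exponent dividing `d!`. -/
theorem exponent_dvd_factorial_of_generated_by_bounded_degree
    (k L : Type*) [Field k] [Field L] [Algebra k L] (d : ℕ) (hd : 1 ≤ d)
    (halg : Algebra.IsAlgebraic k L)
    (hgen : IntermediateField.adjoin k {x : L | (minpoly k x).natDegree ≤ d} = ⊤) :
    ∀ σ : L ≃ₐ[k] L, σ ^ Nat.factorial d = 1 := by
  intro σ
  have key : ∀ x : L, (minpoly k x).natDegree ≤ d → (σ ^ Nat.factorial d) x = x := by
    intro x hx
    classical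
    have hint : IsIntegral k x := (halg.isIntegral).isIntegral x
    have hx0 : minpoly k x ≠ 0 := minpoly.ne_zero hint
    -- every σ^n x is a root of minpoly k x
    have hroot : ∀ n : ℕ, (σ ^ n) x ∈ ((minpoly k x).aroots L).toFinset := by
      intro n
      rw [Multiset.mem_toFinset, Polynomial.mem_aroots]
      refine ⟨hx0, ?_⟩
      have := Polynomial.aeval_algHom_apply ((σ ^ n : L ≃ₐ[k] L) : L →ₐ[k] L) x (minpoly k x)
      rw [minpoly.aeval, map_zero] at this
      exact this
    have hcard : (((minpoly k x).aroots L).toFinset).card < (Finset.range (d + 1)).card := by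
      have h1 := Multiset.toFinset_card_le ((minpoly k x).aroots L)
      have h2 : Multiset.card ((minpoly k x).aroots L) ≤ (minpoly k x).natDegree := by
        simpa using Polynomial.card_roots' ((minpoly k x).map (algebraMap k L))
      rw [Finset.card_range]; omega
    obtain ⟨i, hi, j, hj, hij, heq⟩ := Finset.exists_ne_map_eq_of_card_lt_of_maps_to hcard
      (fun n _ => hroot n)
    -- wlog i < j
    rcases hij.lt_or_gt with h | h
    case _ =>
      -- σ^(j-i) x = x
      have hfix : (σ ^ (j - i)) x = x := by
        have h1 : (σ ^ i) ((σ ^ (j - i)) x) = (σ ^ i) x := by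
          rw [← AlgEquiv.mul_apply, ← pow_add, Nat.add_sub_cancel' h.le, heq]
        exact (σ ^ i).injective h1
      have hdvd : (j - i) ∣ Nat.factorial d :=
        Nat.dvd_factorial (by omega) (by simp at hj; omega)
      obtain ⟨t, ht⟩ := hdvd
      rw [ht, pow_mul]
      clear ht
      induction t with
      | zero => simp
      | succ n ih =>
        rw [pow_succ, AlgEquiv.mul_apply, hfix, ih]
    case _ =>
      have hfix : (σ ^ (i - j)) x = x := by
        have h1 : (σ ^ j) ((σ ^ (i - j)) x) = (σ ^ j) x := by
          rw [← AlgEquiv.mul_apply, ← pow_add, Nat.add_sub_cancel' h.le, ← heq]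
        exact (σ ^ j).injective h1
      have hdvd : (i - j) ∣ Nat.factorial d :=
        Nat.dvd_factorial (by omega) (by simp at hi; omega)
      obtain ⟨t, ht⟩ := hdvd
      rw [ht, pow_mul]
      clear ht
      induction t with
      | zero => simp
      | succ n ih =>
        rw [pow_succ, AlgEquiv.mul_apply, hfix, ih]
    
  ext y
  have hy : y ∈ IntermediateField.adjoin k {x : L | (minpoly k x).natDegree ≤ d} := by
    rw [hgen]; trivial
  show (σ ^ Nat.factorial d) y = y
  induction hy using IntermediateField.adjoin_induction with
  | mem x hx => exact key x hx
  | algebraMap x => exact (σ ^ Nat.factorial d).commutes x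
  | add x y _ _ hx hy => rw [map_add, hx, hy]
  | inv x _ hx => rw [map_inv₀, hx]
  | mul x y _ _ hx hy => rw [map_mul, hx, hy]
end

section
/- Let k be a field, let e ≥ 1 be an integer, and let L/k be a (possibly infinite) Galois extension whose Galois group Gal(L/k) is abelian and satisfies σ^e = id for every σ ∈ Gal(L/k) (i.e., has exponent dividing e). Then L is generated over k by its elements of degree at most e over k; equivalently, L is contained in the compositum k^{(e)} of all finite extensions of k of degree ≤ e. -/
/-!
Let `σ ≠ 1` in the abelian group `Gal(L/k)`. It acts nontrivially on some finite Galois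
subextension `E`, and a character `Gal(E/k) → ℂˣ` not killing `σ|_E` has a kernel `H` with
cyclic quotient, so `[Gal(E/k) : H]` divides the exponent. The fixed field of `H` has degree
`[Gal(E/k) : H]` and contains an element moved by `σ`, whose degree divides that of the field.
So no nontrivial automorphism fixes the elements whose degree divides the exponent, and by the
(infinite) Galois correspondence these elements generate `L`.
-/

open IntermediateField

theorem CommGroup.exists_index_dvd_exponent_notMem {G : Type*} [CommGroup G] [Finite G] {a : G}
    (ha : a ≠ 1) : ∃ H : Subgroup G, H.index ∣ Monoid.exponent G ∧ a ∉ H := by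
  have : NeZero (Monoid.exponent G : ℂ) :=
    ⟨Nat.cast_ne_zero.mpr Monoid.exponent_ne_zero_of_finite⟩
  obtain ⟨φ, hφ⟩ := CommGroup.exists_apply_ne_one_of_hasEnoughRootsOfUnity G ℂ ha
  refine ⟨φ.ker, ?_, hφ⟩
  have : Finite φ.range := Set.finite_range φ
  have : IsCyclic φ.range := isCyclic_subgroup_units _
  rw [Subgroup.index_ker, ← IsCyclic.exponent_eq_card]
  exact MonoidHom.exponent_dvd φ.rangeRestrict_surjective

namespace IsGalois

open scoped IsMulCommutative in
theorem exists_apply_ne_and_natDegree_minpoly_dvd_exponent_of_finiteDimensional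
    {k E : Type*} [Field k] [Field E] [Algebra k E] [FiniteDimensional k E] [IsGalois k E]
    [IsMulCommutative (E ≃ₐ[k] E)] {σ : E ≃ₐ[k] E} (hσ : σ ≠ 1) :
    ∃ z : E, σ z ≠ z ∧ (minpoly k z).natDegree ∣ Monoid.exponent (E ≃ₐ[k] E) := by
  obtain ⟨H, hH, hσH⟩ := CommGroup.exists_index_dvd_exponent_notMem hσ
  rw [← fixingSubgroup_fixedField H, IntermediateField.mem_fixingSubgroup_iff] at hσH
  push Not at hσH
  obtain ⟨z, hz, hσz⟩ := hσH
  refine ⟨z, hσz, ?_⟩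
  calc (minpoly k z).natDegree = (minpoly k (⟨z, hz⟩ : fixedField H)).natDegree := by
        rw [minpoly_eq]
    _ ∣ Module.finrank k (fixedField H) := minpoly.degree_dvd (.of_finite k _)
    _ = H.index := by rw [finrank_eq_fixingSubgroup_index, fixingSubgroup_fixedField]
    _ ∣ Monoid.exponent (E ≃ₐ[k] E) := hH

variable {k L : Type*} [Field k] [Field L] [Algebra k L] [IsGalois k L]
  [IsMulCommutative (L ≃ₐ[k] L)]

theorem exists_apply_ne_and_natDegree_minpoly_dvd_exponent {σ : L ≃ₐ[k] L} (hσ : σ ≠ 1) :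
    ∃ z : L, σ z ≠ z ∧ (minpoly k z).natDegree ∣ Monoid.exponent (L ≃ₐ[k] L) := by
  obtain ⟨y, hσy⟩ : ∃ y, σ y ≠ y := by
    contrapose! hσ
    exact AlgEquiv.ext hσ
  let E := FiniteGaloisIntermediateField.adjoin k {y}
  have hy : y ∈ (E : IntermediateField k L) :=
    FiniteGaloisIntermediateField.subset_adjoin k {y} rfl
  have hres := AlgEquiv.restrictNormalHom_surjective (F := k) (K₁ := E) L
  have : IsMulCommutative (E ≃ₐ[k] E) := isMulCommutative_iff.mpr fun a b => by
    obtain ⟨a, rfl⟩ := hres a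
    obtain ⟨b, rfl⟩ := hres b
    rw [← map_mul, ← map_mul, mul_comm' a b]
  have hσE : AlgEquiv.restrictNormalHom E σ ≠ 1 := fun h => hσy <| by
    simpa [h] using (AlgEquiv.restrictNormalHom_apply E σ ⟨y, hy⟩).symm
  obtain ⟨z, hσz, hz⟩ :=
    exists_apply_ne_and_natDegree_minpoly_dvd_exponent_of_finiteDimensional hσE
  refine ⟨z, fun h => hσz (Subtype.ext ?_), ?_⟩
  · rwa [AlgEquiv.restrictNormalHom_apply]
  · rw [← minpoly_eq]
    exact hz.trans (MonoidHom.exponent_dvd hres)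

variable (k L) in
theorem adjoin_natDegree_minpoly_dvd_exponent_eq_top :
    adjoin k {x : L | (minpoly k x).natDegree ∣ Monoid.exponent (L ≃ₐ[k] L)} = ⊤ := by
  set F := adjoin k {x : L | (minpoly k x).natDegree ∣ Monoid.exponent (L ≃ₐ[k] L)}
  have hF : F.fixingSubgroup = ⊥ := by
    refine (Subgroup.eq_bot_iff_forall _).mpr fun σ hσ => ?_
    by_contra hσ1
    obtain ⟨z, hσz, hz⟩ := exists_apply_ne_and_natDegree_minpoly_dvd_exponent hσ1
    exact hσz ((IntermediateField.mem_fixingSubgroup_iff _ _).mp hσ z (subset_adjoin k _ hz))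
  rw [← InfiniteGalois.fixedField_fixingSubgroup F, hF, fixedField_bot]

end IsGalois

/-- If `L/k` is a (possibly infinite) Galois extension whose Galois group
is abelian of exponent dividing `e`, then `L` is generated over `k` by its elements of
degree at most `e` over `k` (equivalently, `L ⊆ k^{(e)}`). -/
theorem abelian_bounded_exponent_galois_generated_by_bounded_degree
    (k L : Type*) [Field k] [Field L] [Algebra k L] [IsGalois k L]
    (e : ℕ) (he : 1 ≤ e)
    (hab : ∀ σ τ : L ≃ₐ[k] L, σ * τ = τ * σ)
    (hexp : ∀ σ : L ≃ₐ[k] L, σ ^ e = 1) :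
    IntermediateField.adjoin k {x : L | (minpoly k x).natDegree ≤ e} = ⊤ := by
  have : IsMulCommutative (L ≃ₐ[k] L) := isMulCommutative_iff.mpr hab
  have hdvd : Monoid.exponent (L ≃ₐ[k] L) ∣ e := Monoid.exponent_dvd_of_forall_pow_eq_one hexp
  refine top_unique <| (IsGalois.adjoin_natDegree_minpoly_dvd_exponent_eq_top k L).ge.trans <|
    adjoin.mono k _ _ fun x hx => Nat.le_of_dvd he (hx.trans hdvd)
end

section
/- Let G be a finite group, p a prime number, W a minimal normal subgroup of G (i.e., W ≠ 1 and every normal subgroup of G that is nontrivial and contained in W equals W), and E ≤ G a p-subgroup such that W ∩ E = 1 and WE = G. If E is not normal in G, then the subgroup of G generated by all Sylow p-subgroups of G is G itself. -/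
open Pointwise

lemma sylowClosure_normal (G : Type*) [Group G] (p : ℕ) [Fact p.Prime] [Finite G] :
    (⨆ P : Sylow p G, (P : Subgroup G)).Normal := by
  constructor
  intro n hn g
  refine Subgroup.iSup_induction _ (C := fun x => g * x * g⁻¹ ∈ ⨆ P : Sylow p G, (P : Subgroup G))
    hn (fun P x hx => ?_) (by simpa using Subgroup.one_mem _) (fun x y hx hy => ?_)
  · have hmem : g * x * g⁻¹ ∈ (MulAut.conj g • (P : Subgroup G)) :=
      Subgroup.smul_mem_pointwise_smul x (MulAut.conj g) _ hx
    have hco : (MulAut.conj g • (P : Subgroup G)) = ((g • P : Sylow p G) : Subgroup G) := rfl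
    rw [hco] at hmem
    exact le_iSup (fun P : Sylow p G => (P : Subgroup G)) (g • P) hmem
  · have h : g * (x * y) * g⁻¹ = (g * x * g⁻¹) * (g * y * g⁻¹) := by group
    show g * (x * y) * g⁻¹ ∈ _
    rw [h]; exact mul_mem hx hy

/-- Let `G` be a finite group, `p` a prime, `W` a minimal normal subgroup
of `G`, and `E ≤ G` a `p`-subgroup with `W ∩ E = 1` and `WE = G`. If `E` is not normal in
`G`, then the subgroup of `G` generated by all Sylow `p`-subgroups of `G` is `G` itself. -/
theorem sylow_closure_eq_top_of_minimal_normal_complement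
    (G : Type*) [Group G] [Finite G] (p : ℕ) (hp : p.Prime)
    (W E : Subgroup G) [W.Normal]
    (hWbot : W ≠ ⊥)
    (hWmin : ∀ N : Subgroup G, N.Normal → N ≤ W → N ≠ ⊥ → N = W)
    (hE : IsPGroup p E)
    (hWEinf : W ⊓ E = ⊥) (hWEsup : W ⊔ E = ⊤)
    (hEnotnormal : ¬ E.Normal) :
    (⨆ P : Sylow p G, (P : Subgroup G)) = ⊤ := by
  haveI : Fact p.Prime := ⟨hp⟩
  set K := ⨆ P : Sylow p G, (P : Subgroup G) with hK
  haveI hKn : K.Normal := sylowClosure_normal G p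
  obtain ⟨P, hEP⟩ := hE.exists_le_sylow
  have hEK : E ≤ K := hEP.trans (le_iSup (fun P : Sylow p G => (P : Subgroup G)) P)
  by_cases hKW : K ⊓ W = ⊥
  · -- K and W commute elementwise, so W normalizes E; contradiction
    exfalso
    have hcomm := Subgroup.commute_of_normal_of_disjoint K W hKn ‹W.Normal›
      (disjoint_iff.mpr hKW)
    apply hEnotnormal
    rw [← Subgroup.normalizer_eq_top_iff, ← top_le_iff, ← hWEsup, sup_le_iff]
    refine ⟨fun w hw => ?_, Subgroup.le_normalizer⟩
    have key : ∀ x ∈ K, w * x * w⁻¹ = x := by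
      intro x hx
      rw [mul_inv_eq_iff_eq_mul]
      exact (hcomm x w hx hw).symm
    rw [Subgroup.mem_normalizer_iff]
    intro e
    constructor
    · intro he
      rw [key e (hEK he)]; exact he
    · intro he
      have h1 : w * e * w⁻¹ = e := by
        have := key (w * e * w⁻¹) (hEK he)
        have h2 : w * (w * e * w⁻¹) * w⁻¹ = w * e * w⁻¹ := this
        calc w * e * w⁻¹ = w⁻¹ * (w * (w * e * w⁻¹) * w⁻¹) * w := by group
          _ = w⁻¹ * (w * e * w⁻¹) * w := by rw [h2]
          _ = e := by group
      rwa [← h1]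
  · have hWK : W ≤ K := by
      have hN : (K ⊓ W).Normal := Subgroup.normal_inf_normal K W
      have := hWmin (K ⊓ W) hN inf_le_right hKW
      rw [← this]; exact inf_le_left
    rw [← top_le_iff, ← hWEsup]
    exact sup_le hWK hEK
end

section
/- Let κ be an algebraically closed field of characteristic p > 0 and let n ≥ 1 be an integer. The Galois group of the polynomial X^(p^n) − X − x^(−1) over the field κ((x)) of formal Laurent series with coefficients in κ is isomorphic to the elementary abelian group (ℤ/pℤ)^n. -/
/-!
Write `q = p ^ n` and `x` for the uniformiser of `κ((x))`. The reverse of `X^q - X - x⁻¹` is,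
up to the unit `-x⁻¹`, the polynomial `X^q + x (X^(q-1) - 1)`, which is Eisenstein at `x` over
`κ[[x]]`; by Gauss's lemma `X^q - X - x⁻¹` is irreducible over `κ((x))`. Any two of its roots
differ by a root of `X^q - X`, and these all lie in `κ`. So for a fixed root `a` the map
`σ ↦ σ a - a` embeds the Galois group into the additive group of the splitting field, which has
exponent `p`, and irreducibility gives the group order `q`: it is elementary abelian of rank `n`.
-/

open Polynomial

section ElementaryAbelian

variable {p : ℕ} [Fact p.Prime]

theorem nonempty_addEquiv_pi_zmod_of_card_eq {V : Type*} [AddCommGroup V] [Module (ZMod p) V]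
    [Finite V] {n : ℕ} (hV : Nat.card V = p ^ n) : Nonempty (V ≃+ (Fin n → ZMod p)) := by
  have : Fintype V := Fintype.ofFinite V
  have hdim : Module.finrank (ZMod p) V = n := by
    apply Nat.pow_right_injective (Fact.out : p.Prime).two_le
    change p ^ _ = p ^ n
    rw [← hV, Nat.card_eq_fintype_card, Module.card_eq_pow_finrank (K := ZMod p), ZMod.card]
  exact ⟨(Module.finBasisOfFinrankEq (ZMod p) V hdim).equivFun.toAddEquiv⟩

theorem nonempty_mulEquiv_pi_zmod_of_injective {G H : Type*} [Group G] [Finite G] [CommGroup H]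
    (hH : ∀ h : H, h ^ p = 1) {φ : G →* H} (hφ : Function.Injective φ) {n : ℕ}
    (hG : Nat.card G = p ^ n) : Nonempty (G ≃* (Fin n → Multiplicative (ZMod p))) := by
  let e : G ≃* φ.range := MonoidHom.ofInjective hφ
  let : Module (ZMod p) (Additive φ.range) :=
    AddCommGroup.zmodModule fun v => congrArg Additive.ofMul (Subtype.ext (hH _))
  have : Finite (Additive φ.range) := Finite.of_equiv G e.toEquiv
  obtain ⟨f⟩ := nonempty_addEquiv_pi_zmod_of_card_eq (p := p) (V := Additive φ.range)
    ((Nat.card_congr e.toEquiv).symm.trans hG)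
  exact ⟨e.trans ((AddEquiv.toMultiplicativeRight f).trans (MulEquiv.piMultiplicative _))⟩

end ElementaryAbelian

section Degree

variable {R : Type*} [CommRing R] [Nontrivial R] {q : ℕ}

theorem natDegree_X_pow_sub_X_sub_C (hq : 1 < q) (c : R) : (X ^ q - X - C c).natDegree = q := by
  rw [sub_sub, natDegree_sub_eq_left_of_natDegree_lt (by rwa [natDegree_X_add_C, natDegree_X_pow]),
    natDegree_X_pow]

theorem monic_X_pow_sub_X_sub_C (hq : 1 < q) (c : R) : (X ^ q - X - C c).Monic := by
  rw [sub_sub]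
  exact (monic_X_pow q).sub_of_left
    (degree_lt_degree (by rwa [natDegree_X_add_C, natDegree_X_pow]))

theorem natDegree_C_mul_X_pow_pred_sub_one_lt (hq : 0 < q) (π : R) :
    (C π * (X ^ (q - 1) - 1)).natDegree < q :=
  (natDegree_C_mul_le _ _).trans_lt (by rw [← C_1, natDegree_X_pow_sub_C]; omega)

theorem monic_X_pow_add_C_mul (hq : 0 < q) (π : R) : (X ^ q + C π * (X ^ (q - 1) - 1)).Monic :=
  (monic_X_pow q).add_of_left
    (degree_lt_degree (by rw [natDegree_X_pow]; exact natDegree_C_mul_X_pow_pred_sub_one_lt hq π))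

theorem natDegree_X_pow_add_C_mul (hq : 0 < q) (π : R) :
    (X ^ q + C π * (X ^ (q - 1) - 1)).natDegree = q := by
  rw [natDegree_add_eq_left_of_natDegree_lt
    (by rw [natDegree_X_pow]; exact natDegree_C_mul_X_pow_pred_sub_one_lt hq π), natDegree_X_pow]

theorem reverse_X_pow_sub_X_sub_C (hq : 1 < q) (c : R) :
    (X ^ q - X - C c).reverse = 1 - X ^ (q - 1) - C c * X ^ q := by
  have reflect_X : reflect q (X : R[X]) = X ^ (q - 1) := by
    simpa [revAt_le hq.le] using reflect_monomial (R := R) q 1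
  rw [reverse, natDegree_X_pow_sub_X_sub_C hq, reflect_sub, reflect_sub, reflect_C,
    reflect_monomial, revAt_le le_rfl, Nat.sub_self, pow_zero, reflect_X]

end Degree

theorem Polynomial.irreducible_of_irreducible_reverse {K : Type*} [Field K] {f : K[X]}
    (hf : f.coeff 0 ≠ 0) (h : Irreducible f.reverse) : Irreducible f := by
  have isUnit_of_isUnit_reverse (g : K[X]) (hg : g.coeff 0 ≠ 0) (hu : IsUnit g.reverse) :
      IsUnit g := by
    have hdeg : g.natDegree = 0 := by
      rw [← natDegree_eq_zero_of_isUnit hu, reverse_natDegree,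
        natTrailingDegree_eq_zero.2 (Or.inr hg), Nat.sub_zero]
    rw [eq_C_of_natDegree_eq_zero hdeg]
    exact isUnit_C.2 (Ne.isUnit hg)
  refine irreducible_iff.2 ⟨fun hu => h.not_isUnit ?_, fun a b hab => ?_⟩
  · obtain ⟨r, hr, rfl⟩ := isUnit_iff.1 hu
    simpa using isUnit_C.2 hr
  · rw [hab, mul_coeff_zero] at hf
    rw [hab, reverse_mul_of_domain] at h
    exact (h.isUnit_or_isUnit rfl).imp (isUnit_of_isUnit_reverse a (left_ne_zero_of_mul hf))
      (isUnit_of_isUnit_reverse b (right_ne_zero_of_mul hf))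

theorem irreducible_X_pow_sub_X_sub_C_inv {K : Type*} [Field K] {x : K} (hx : x ≠ 0) {q : ℕ}
    (hq : 1 < q) (h : Irreducible (X ^ q + C x * (X ^ (q - 1) - 1))) :
    Irreducible (X ^ q - X - C x⁻¹) := by
  refine irreducible_of_irreducible_reverse ?_ ?_
  · rw [coeff_sub, coeff_sub, coeff_X_pow, if_neg (by omega), coeff_X_zero, coeff_C_zero]
    simpa using hx
  · have hxx : C x⁻¹ * C x = (1 : K[X]) := by rw [← C_mul, inv_mul_cancel₀ hx, C_1]
    have hfactor : (1 - X ^ (q - 1) - C x⁻¹ * X ^ q : K[X]) =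
        -C x⁻¹ * (X ^ q + C x * (X ^ (q - 1) - 1)) := by
      linear_combination (X ^ (q - 1) - 1) * hxx
    rw [reverse_X_pow_sub_X_sub_C hq, hfactor]
    exact (irreducible_isUnit_mul (isUnit_C.2 (inv_ne_zero hx).isUnit).neg).2 h

section Eisenstein

variable {R : Type*} [CommRing R] [IsDomain R] {π : R} {q : ℕ}

theorem isEisensteinAt_X_pow_add_C_mul (hπ : Prime π) (hq : 2 ≤ q) :
    (X ^ q + C π * (X ^ (q - 1) - 1)).IsEisensteinAt (Ideal.span {π}) := by
  have hq0 : 0 < q := by omega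
  refine ⟨?_, fun {k} hk => ?_, ?_⟩
  · rw [(monic_X_pow_add_C_mul hq0 π).leadingCoeff, Ideal.mem_span_singleton]
    exact hπ.not_dvd_one
  · rw [natDegree_X_pow_add_C_mul hq0] at hk
    rw [coeff_add, coeff_X_pow, if_neg hk.ne, zero_add, coeff_C_mul]
    exact Ideal.mem_span_singleton.2 (dvd_mul_right _ _)
  · rw [Ideal.span_singleton_pow, Ideal.mem_span_singleton, coeff_add, coeff_X_pow,
      if_neg (by omega), zero_add, coeff_C_mul, coeff_sub, coeff_X_pow, if_neg (by omega),
      coeff_one_zero, zero_sub, mul_neg_one, dvd_neg]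
    simpa using (_root_.pow_dvd_pow_iff (m := 1) hπ.ne_zero hπ.not_isUnit).not.2 (by omega)

theorem irreducible_X_pow_add_C_mul_of_prime {K : Type*} [Field K] [Algebra R K]
    [IsFractionRing R K] [IsIntegrallyClosed R] (hπ : Prime π) (hq : 2 ≤ q) :
    Irreducible (X ^ q + C (algebraMap R K π) * (X ^ (q - 1) - 1)) := by
  have hmon := monic_X_pow_add_C_mul (by omega : 0 < q) π
  have hirr := (isEisensteinAt_X_pow_add_C_mul hπ hq).irreducible
    ((Ideal.span_singleton_prime hπ.ne_zero).2 hπ) hmon.isPrimitive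
    (by rw [natDegree_X_pow_add_C_mul (by omega : 0 < q)]; omega)
  simpa using hmon.irreducible_iff_irreducible_map_fraction_map.1 hirr

end Eisenstein

section Gal

variable {K : Type*} [Field K]

theorem aeval_gal_apply_eq_zero {f : K[X]} (σ : f.Gal) {a : f.SplittingField}
    (ha : aeval a f = 0) : aeval (σ a) f = 0 := by
  rw [show σ a = σ.toAlgHom a from rfl, aeval_algHom_apply, ha, map_zero]

theorem gal_apply_algebraMap {f : K[X]} (σ : f.Gal) (k : K) :
    σ (algebraMap K f.SplittingField k) = algebraMap K f.SplittingField k :=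
  σ.commutes k

end Gal

section ArtinSchreier

variable {K : Type*} [Field K] {p : ℕ} [CharP K p] {n : ℕ}

theorem separable_X_pow_sub_X_sub_C (hn : n ≠ 0) (c : K) : (X ^ p ^ n - X - C c).Separable := by
  have hder : derivative (X ^ p ^ n - X - C c : K[X]) = -1 := by
    simp [derivative_X_pow, CharP.cast_eq_zero, hn]
  rw [Separable, hder]
  exact isCoprime_one_right.neg_right

variable [Fact p.Prime] {c : K}

theorem sub_mem_range_of_aeval_X_pow_sub_X_sub_C {L : Type*} [Field L] [Algebra K L] (hn : n ≠ 0)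
    (hsplit : (X ^ p ^ n - X : K[X]).Splits) {a b : L} (ha : aeval a (X ^ p ^ n - X - C c) = 0)
    (hb : aeval b (X ^ p ^ n - X - C c) = 0) : b - a ∈ (algebraMap K L).range := by
  have : CharP L p := (Algebra.charP_iff K L p).1 inferInstance
  refine hsplit.mem_range_of_isRoot (galois_poly_separable p _ (dvd_pow_self p hn)).ne_zero ?_
  simp only [map_sub, map_pow, aeval_X, aeval_C] at ha hb
  simp only [Polynomial.map_sub, Polynomial.map_pow, map_X, IsRoot, eval_sub, eval_pow, eval_X,
    sub_pow_char_pow]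
  linear_combination hb - ha

variable {a : (X ^ p ^ n - X - C c : K[X]).SplittingField}

theorem gal_X_pow_sub_X_sub_C_ext (hn : n ≠ 0)
    (hsplit : (X ^ p ^ n - X : K[X]).Splits) (ha : aeval a (X ^ p ^ n - X - C c) = 0)
    {σ τ : (X ^ p ^ n - X - C c).Gal} (h : σ a = τ a) : σ = τ := by
  refine Gal.ext _ fun b hb => ?_
  obtain ⟨k, hk⟩ := sub_mem_range_of_aeval_X_pow_sub_X_sub_C hn hsplit ha (mem_rootSet.1 hb).2
  rw [sub_eq_iff_eq_add'.1 hk.symm, map_add, map_add, gal_apply_algebraMap, gal_apply_algebraMap, h]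

theorem exists_injective_hom_gal_X_pow_sub_X_sub_C (hn : n ≠ 0)
    (hsplit : (X ^ p ^ n - X : K[X]).Splits) (ha : aeval a (X ^ p ^ n - X - C c) = 0) :
    ∃ φ : (X ^ p ^ n - X - C c).Gal →* Multiplicative (X ^ p ^ n - X - C c).SplittingField,
      Function.Injective φ := by
  refine ⟨MonoidHom.mk' (fun σ => Multiplicative.ofAdd (σ a - a)) fun σ τ => ?_,
    fun σ τ h => gal_X_pow_sub_X_sub_C_ext hn hsplit ha
      (sub_left_injective (Multiplicative.ofAdd.injective h))⟩
  obtain ⟨k, hk⟩ :=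
    sub_mem_range_of_aeval_X_pow_sub_X_sub_C hn hsplit ha (aeval_gal_apply_eq_zero τ ha)
  change Multiplicative.ofAdd (σ (τ a) - a) = _
  rw [← ofAdd_add, sub_eq_iff_eq_add'.1 hk.symm, map_add, gal_apply_algebraMap]
  congr 1
  ring

theorem card_gal_X_pow_sub_X_sub_C (hn : n ≠ 0) (hsplit : (X ^ p ^ n - X : K[X]).Splits)
    (hirr : Irreducible (X ^ p ^ n - X - C c)) (ha : aeval a (X ^ p ^ n - X - C c) = 0) :
    Nat.card (X ^ p ^ n - X - C c).Gal = p ^ n := by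
  have hq : 1 < p ^ n := Nat.one_lt_pow hn (Fact.out : p.Prime).one_lt
  have hsep := separable_X_pow_sub_X_sub_C hn c
  refine le_antisymm ?_ ?_
  · calc Nat.card (X ^ p ^ n - X - C c).Gal
        ≤ Nat.card ((X ^ p ^ n - X - C c).rootSet (X ^ p ^ n - X - C c).SplittingField) :=
          Nat.card_le_card_of_injective
            (fun σ => ⟨σ a, mem_rootSet.2 ⟨hsep.ne_zero, aeval_gal_apply_eq_zero σ ha⟩⟩)
            fun σ τ h => gal_X_pow_sub_X_sub_C_ext hn hsplit ha (congrArg Subtype.val h)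
      _ = p ^ n := by
          rw [Nat.card_eq_fintype_card, card_rootSet_eq_natDegree hsep (SplittingField.splits _),
            natDegree_X_pow_sub_X_sub_C hq]
  · rw [Gal.card_of_separable hsep]
    calc p ^ n = (minpoly K a).natDegree := by
          rw [← minpoly.eq_of_irreducible_of_monic hirr ha (monic_X_pow_sub_X_sub_C hq c),
            natDegree_X_pow_sub_X_sub_C hq]
      _ ≤ _ := minpoly.natDegree_le a

theorem nonempty_gal_X_pow_sub_X_sub_C_mulEquiv (hn : n ≠ 0)
    (hsplit : (X ^ p ^ n - X : K[X]).Splits) (hirr : Irreducible (X ^ p ^ n - X - C c)) :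
    Nonempty ((X ^ p ^ n - X - C c).Gal ≃* (Fin n → Multiplicative (ZMod p))) := by
  have hq : 1 < p ^ n := Nat.one_lt_pow hn (Fact.out : p.Prime).one_lt
  obtain ⟨a, ha⟩ := (SplittingField.splits (X ^ p ^ n - X - C c)).exists_eval_eq_zero
    (by rw [degree_map, degree_eq_natDegree (monic_X_pow_sub_X_sub_C hq c).ne_zero,
      natDegree_X_pow_sub_X_sub_C hq c]; exact_mod_cast hq.ne_bot)
  rw [eval_map_algebraMap] at ha
  have : CharP (X ^ p ^ n - X - C c).SplittingField p := (Algebra.charP_iff K _ p).1 inferInstance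
  obtain ⟨φ, hφ⟩ := exists_injective_hom_gal_X_pow_sub_X_sub_C hn hsplit ha
  refine nonempty_mulEquiv_pi_zmod_of_injective (fun h => ?_) hφ
    (card_gal_X_pow_sub_X_sub_C hn hsplit hirr ha)
  rw [← ofAdd_toAdd h, ← ofAdd_nsmul, nsmul_eq_mul, CharP.cast_eq_zero, zero_mul, ofAdd_zero]

end ArtinSchreier

/-- Over the Laurent series field `κ((x))` with `κ` algebraically closed of
characteristic `p > 0`, the Galois group of `X^(p^n) - X - x⁻¹` is `(ℤ/pℤ)^n`. -/
theorem gal_artinSchreier_laurentSeries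
    (κ : Type*) [Field κ] [IsAlgClosed κ] (p : ℕ) (hp : p.Prime) [CharP κ p]
    (n : ℕ) (hn : 1 ≤ n) :
    Nonempty
      ((Polynomial.X ^ (p ^ n) - Polynomial.X -
          Polynomial.C ((HahnSeries.single (1 : ℤ) (1 : κ) : LaurentSeries κ)⁻¹)).Gal ≃*
        (Fin n → Multiplicative (ZMod p))) := by
  have : Fact p.Prime := ⟨hp⟩
  have : CharP (LaurentSeries κ) p := charP_of_injective_algebraMap (algebraMap κ _).injective p
  have hq : 1 < p ^ n := Nat.one_lt_pow (by omega) hp.one_lt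
  have hX : algebraMap (PowerSeries κ) (LaurentSeries κ) PowerSeries.X = HahnSeries.single 1 1 :=
    HahnSeries.ofPowerSeries_X
  have hirr := irreducible_X_pow_sub_X_sub_C_inv (HahnSeries.single_ne_zero one_ne_zero) hq
    (hX ▸ irreducible_X_pow_add_C_mul_of_prime PowerSeries.X_prime hq)
  have hsplit := (IsAlgClosed.splits (X ^ p ^ n - X : κ[X])).map (algebraMap κ (LaurentSeries κ))
  rw [Polynomial.map_sub, Polynomial.map_pow, map_X] at hsplit
  exact nonempty_gal_X_pow_sub_X_sub_C_mulEquiv (by omega) hsplit hirr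
end

section
/- Let κ be an algebraically closed field of characteristic p > 0. Then the absolute Galois group of the Laurent series field κ((x)) — i.e., the Galois group of a separable closure of κ((x)) over κ((x)), equipped with the Krull topology — is not topologically finitely generated: there is no finite subset whose generated subgroup is dense. -/
/-- The absolute Galois group of a field `K`: the group of `K`-algebra automorphisms of a
separable closure of `K` (realized inside an algebraic closure), carrying the Krull
topology. -/
abbrev AbsoluteGaloisGroup (K : Type*) [Field K] : Type _ :=
  separableClosure K (AlgebraicClosure K) ≃ₐ[K] separableClosure K (AlgebraicClosure K)

/-!
A root `α` of `X ^ p - X - a` in a separable closure of a field `K` of characteristic `p` gives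
a continuous character `σ ↦ σ α - α` of the absolute Galois group with values in `𝔽_p`, and two
such characters coincide only if the difference of their parameters lies in
`℘(K) = {b ^ p - b | b ∈ K}`. A topologically finitely generated group has only finitely many
continuous homomorphisms to a finite group, as they are determined by their values on the
generators. In `κ((x))` the elements `x ^ (-(i p + 1))` are pairwise incongruent modulo `℘`: an
element of `℘(κ((x)))` of negative order has order divisible by `p`.
-/

open Polynomial IntermediateField

def Group.TopologicallyFG (G : Type*) [Group G] [TopologicalSpace G] : Prop :=
  ∃ S : Set G, S.Finite ∧ Dense (Subgroup.closure S : Set G)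

theorem Group.TopologicallyFG.finite_setOf_continuous_monoidHom {G H : Type*} [Group G]
    [TopologicalSpace G] [Group H] [TopologicalSpace H] [T2Space H] [Finite H]
    (hG : Group.TopologicallyFG G) : {f : G →* H | Continuous f}.Finite := by
  obtain ⟨S, hS, hdense⟩ := hG
  have := hS.to_subtype
  refine Set.Finite.of_finite_image (f := fun f (s : S) ↦ f s) (Set.toFinite _) ?_
  intro f hf g hg hfg
  exact DFunLike.coe_injective <| Continuous.ext_on hdense hf hg <|
    MonoidHom.eqOn_closure fun s hs ↦ congrFun hfg ⟨s, hs⟩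

theorem AlgEquiv.apply_zmodCastHom {K L : Type*} [Field K] [Field L] [Algebra K L] {p : ℕ}
    [CharP L p] (σ : L ≃ₐ[K] L) (c : ZMod p) :
    σ (ZMod.castHom dvd_rfl L c) = ZMod.castHom dvd_rfl L c :=
  RingHom.congr_fun (RingHom.ext_zmod (σ.toRingHom.comp (ZMod.castHom dvd_rfl L)) _) c

theorem IsSepClosed.exists_pow_sub_self_eq {L : Type*} [Field L] [IsSepClosed L] (p : ℕ)
    [Fact p.Prime] [CharP L p] (c : L) : ∃ x : L, x ^ p - x = c := by
  obtain ⟨x, hx⟩ := exists_root_C_mul_X_pow_add_C_mul_X_add_C' p p 1 (-1) (-c) dvd_rfl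
    (Fact.out : p.Prime).two_le (neg_ne_zero.mpr one_ne_zero)
  exact ⟨x, by linear_combination hx⟩

section ArtinSchreier

variable {K L : Type*} [Field K] [Field L] [Algebra K L] {p : ℕ} [Fact p.Prime] {α : L} {a : K}

theorem isIntegral_of_pow_sub_self_eq (hα : α ^ p - α = algebraMap K L a) : IsIntegral K α := by
  refine ⟨X ^ p - (X + C a), monic_X_pow_sub ?_, ?_⟩
  · rw [degree_X_add_C]
    exact_mod_cast (Fact.out : p.Prime).one_lt
  · simp [← hα]

variable [CharP L p]

theorem exists_zmodCastHom_eq_of_pow_eq_self {y : L} (h : y ^ p = y) :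
    ∃ c : ZMod p, ZMod.castHom dvd_rfl L c = y := by
  rwa [← RingHom.mem_fieldRange, ZMod.fieldRange_castHom_eq_bot, Subfield.mem_bot_iff_pow_eq_self]

theorem exists_zmodCastHom_eq_apply_sub_self (hα : α ^ p - α = algebraMap K L a)
    (σ : L ≃ₐ[K] L) : ∃ c : ZMod p, ZMod.castHom dvd_rfl L c = σ α - α := by
  refine exists_zmodCastHom_eq_of_pow_eq_self ?_
  have hσα : σ α ^ p - σ α = algebraMap K L a := by
    rw [← map_pow, ← map_sub, hα, AlgEquiv.commutes]
  rw [sub_pow_char]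
  linear_combination hσα - hα

noncomputable def artinSchreierChar (hα : α ^ p - α = algebraMap K L a) :
    (L ≃ₐ[K] L) →* Multiplicative (ZMod p) :=
  MonoidHom.mk' (fun σ ↦ .ofAdd (exists_zmodCastHom_eq_apply_sub_self hα σ).choose) fun σ τ ↦ by
    apply Multiplicative.toAdd.injective
    apply (ZMod.castHom dvd_rfl L).injective
    simp only [toAdd_ofAdd, toAdd_mul, map_add,
      fun ρ ↦ (exists_zmodCastHom_eq_apply_sub_self hα ρ).choose_spec]
    obtain ⟨c, hc⟩ := exists_zmodCastHom_eq_apply_sub_self hα τ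
    rw [AlgEquiv.mul_apply, show τ α = α + ZMod.castHom dvd_rfl L c by rw [hc]; ring, map_add,
      AlgEquiv.apply_zmodCastHom]
    ring

theorem zmodCastHom_artinSchreierChar (hα : α ^ p - α = algebraMap K L a) (σ : L ≃ₐ[K] L) :
    ZMod.castHom dvd_rfl L (artinSchreierChar hα σ).toAdd = σ α - α :=
  (exists_zmodCastHom_eq_apply_sub_self hα σ).choose_spec

theorem artinSchreierChar_eq_one_iff (hα : α ^ p - α = algebraMap K L a) {σ : L ≃ₐ[K] L} :
    artinSchreierChar hα σ = 1 ↔ σ α = α := by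
  rw [← toAdd_eq_zero, ← (ZMod.castHom dvd_rfl L).injective.eq_iff, zmodCastHom_artinSchreierChar,
    map_zero, sub_eq_zero]

theorem continuous_artinSchreierChar (hα : α ^ p - α = algebraMap K L a) :
    Continuous (artinSchreierChar hα) := by
  have := adjoin.finiteDimensional (isIntegral_of_pow_sub_self_eq hα)
  refine continuous_of_continuousAt_one _ (tendsto_nhds_of_eventually_eq ?_)
  filter_upwards [K⟮α⟯.fixingSubgroup_isOpen.mem_nhds K⟮α⟯.fixingSubgroup.one_mem] with σ hσ
  rw [map_one, artinSchreierChar_eq_one_iff]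
  exact (mem_fixingSubgroup_iff _ σ).mp hσ α
    (mem_adjoin_simple_self K α)

theorem exists_pow_sub_self_eq_sub_of_artinSchreierChar_eq [IsGalois K L] {β : L} {b : K}
    (hα : α ^ p - α = algebraMap K L a) (hβ : β ^ p - β = algebraMap K L b)
    (h : artinSchreierChar hα = artinSchreierChar hβ) : ∃ c : K, c ^ p - c = a - b := by
  obtain ⟨c, hc⟩ := (InfiniteGalois.mem_range_algebraMap_iff_fixed (α - β)).mpr fun σ ↦ by
    have hσ := congrArg (ZMod.castHom dvd_rfl L ∘ Multiplicative.toAdd) (DFunLike.congr_fun h σ)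
    simp only [Function.comp_apply, zmodCastHom_artinSchreierChar] at hσ
    rw [map_sub]
    linear_combination hσ
  refine ⟨c, (algebraMap K L).injective ?_⟩
  rw [map_sub, map_pow, hc, sub_pow_char, map_sub, ← hα, ← hβ]
  ring

end ArtinSchreier

theorem not_topologicallyFG_of_pow_sub_self_ne_sub {K L : Type*} [Field K] [Field L]
    [Algebra K L] [IsGalois K L] [IsSepClosed L] (p : ℕ) [Fact p.Prime] [CharP K p] (a : ℕ → K)
    (ha : ∀ i j, i < j → ∀ b : K, b ^ p - b ≠ a j - a i) :
    ¬ Group.TopologicallyFG (L ≃ₐ[K] L) := by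
  have := charP_of_injective_algebraMap (algebraMap K L).injective p
  choose α hα using fun i ↦ IsSepClosed.exists_pow_sub_self_eq p (algebraMap K L (a i))
  have hinj : Function.Injective fun i ↦ artinSchreierChar (hα i) :=
    Function.Injective.of_lt_imp_ne fun i j hij h ↦ by
      obtain ⟨b, hb⟩ := exists_pow_sub_self_eq_sub_of_artinSchreierChar_eq (hα j) (hα i) h.symm
      exact ha i j hij b hb
  exact fun hG ↦ Set.infinite_of_injective_forall_mem hinj
    (fun i ↦ continuous_artinSchreierChar (hα i)) hG.finite_setOf_continuous_monoidHom

theorem HahnSeries.order_sub_of_orderTop_lt {Γ R : Type*} [LinearOrder Γ] [Zero Γ] [AddGroup R]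
    {x y : HahnSeries Γ R} (h : x.orderTop < y.orderTop) : (x - y).order = x.order := by
  have hsub := orderTop_sub h
  have hx : x ≠ 0 := orderTop_ne_top.mp h.ne_top
  have hxy : x - y ≠ 0 := orderTop_ne_top.mp (hsub ▸ h.ne_top)
  rw [← WithTop.coe_inj, order_eq_orderTop_of_ne_zero hxy, hsub, order_eq_orderTop_of_ne_zero hx]

namespace LaurentSeries

open HahnSeries

variable {R : Type*} [CommRing R] [IsDomain R] {b : LaurentSeries R} {n : ℕ}

theorem order_pow_sub_self_nonneg (hb : 0 ≤ b.order) : 0 ≤ (b ^ n - b).order := by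
  by_cases h : b ^ n - b = 0
  · simp [h]
  rw [sub_eq_add_neg] at h ⊢
  refine le_trans ?_ (min_order_le_order_add h)
  simp only [order_pow, order_neg, nsmul_eq_mul]
  exact le_min (by positivity) hb

theorem order_pow_sub_self_of_order_neg (hn : 1 < n) (hb : b.order < 0) :
    (b ^ n - b).order = n * b.order := by
  have hb0 : b ≠ 0 := by rintro rfl; simp at hb
  have hlt : (b ^ n).orderTop < b.orderTop := by
    rw [← order_eq_orderTop_of_ne_zero hb0, ← order_eq_orderTop_of_ne_zero (pow_ne_zero n hb0),
      order_pow, nsmul_eq_mul, WithTop.coe_lt_coe]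
    have : (1 : ℤ) < n := by exact_mod_cast hn
    nlinarith
  rw [order_sub_of_orderTop_lt hlt, order_pow, nsmul_eq_mul]

theorem order_single_sub_single {m k : ℤ} (hmk : m < k) :
    (single m (1 : R) - single k (1 : R)).order = m := by
  rw [order_sub_of_orderTop_lt (by simpa [orderTop_single one_ne_zero] using hmk),
    order_single one_ne_zero]

theorem pow_sub_self_ne_single_sub_single {p : ℕ} (hp : p.Prime) {i j : ℕ} (hij : i < j)
    (b : LaurentSeries R) :
    b ^ p - b ≠ single (-(j * p + 1 : ℤ)) (1 : R) - single (-(i * p + 1 : ℤ)) (1 : R) := by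
  intro h
  have hord := congrArg order h
  rw [order_single_sub_single (by gcongr; exact_mod_cast hp.pos)] at hord
  rcases le_or_gt 0 b.order with hb | hb
  · have := order_pow_sub_self_nonneg (n := p) hb
    have : 0 ≤ (j : ℤ) * p := by positivity
    linarith
  · rw [order_pow_sub_self_of_order_neg hp.one_lt hb] at hord
    have : (p : ℤ) ∣ 1 := ⟨-(b.order + j), by linarith⟩
    exact hp.not_dvd_one (Int.natCast_dvd_natCast.mp this)

end LaurentSeries

theorem absoluteGaloisGroup_laurentSeries_not_topologically_finitely_generated_general
    (κ : Type*) [Field κ] (p : ℕ) (hp : p.Prime) [CharP κ p] :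
    ¬ ∃ S : Set (AbsoluteGaloisGroup (LaurentSeries κ)),
      S.Finite ∧
        Dense ((Subgroup.closure S : Subgroup (AbsoluteGaloisGroup (LaurentSeries κ))) :
          Set (AbsoluteGaloisGroup (LaurentSeries κ))) := by
  have : Fact p.Prime := ⟨hp⟩
  have : CharP (LaurentSeries κ) p :=
    charP_of_injective_algebraMap (algebraMap κ (LaurentSeries κ)).injective p
  exact not_topologicallyFG_of_pow_sub_self_ne_sub p
    (fun i : ℕ ↦ HahnSeries.single (-(i * p + 1 : ℤ)) (1 : κ))
    fun _ _ hij b ↦ LaurentSeries.pow_sub_self_ne_single_sub_single hp hij b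

/-- For `κ` algebraically closed of characteristic `p > 0`, the absolute
Galois group of the Laurent series field `κ((x))` (the Galois group of a separable closure,
with the Krull topology) is not topologically finitely generated: no finite subset generates
a dense subgroup. -/
theorem absoluteGaloisGroup_laurentSeries_not_topologically_finitely_generated
    (κ : Type*) [Field κ] [IsAlgClosed κ] (p : ℕ) (hp : p.Prime) [CharP κ p] :
    ¬ ∃ S : Set (AbsoluteGaloisGroup (LaurentSeries κ)),
      S.Finite ∧
        Dense ((Subgroup.closure S : Subgroup (AbsoluteGaloisGroup (LaurentSeries κ))) :
          Set (AbsoluteGaloisGroup (LaurentSeries κ))) :=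
  absoluteGaloisGroup_laurentSeries_not_topologically_finitely_generated_general κ p hp
end

section
/- Let p be an odd prime. The polynomial Y² − Y − (T^p − T), viewed as a polynomial in Y over the rational function field 𝔽_p(T), is irreducible; yet for every t₀ ∈ 𝔽_p, the specialized polynomial Y² − Y − (t₀^p − t₀) ∈ 𝔽_p[Y] splits into linear factors over 𝔽_p (indeed t₀^p − t₀ = 0, so it equals Y(Y − 1)). -/
/-!
If `Y² - Y = T^p - T` had a solution `y ∈ 𝔽_p(T)`, then `y` would be integral over the integrally
closed ring `𝔽_p[T]`, hence a polynomial `f`. But `f² - f` has even degree while `T^p - T` has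
odd degree `p`. At `t₀ ∈ 𝔽_p` the constant term `t₀^p - t₀` vanishes by Fermat's little theorem.
-/

open Polynomial

theorem Polynomial.even_natDegree_sq_sub_self {R : Type*} [CommRing R] [NoZeroDivisors R]
    (f : R[X]) : Even (f ^ 2 - f).natDegree := by
  rcases f.natDegree.eq_zero_or_pos with hf | hf
  · rw [eq_C_of_natDegree_eq_zero hf, ← C_pow, ← C_sub, natDegree_C]
    exact Even.zero
  · rw [natDegree_sub_eq_left_of_natDegree_lt (by rw [natDegree_pow]; omega), natDegree_pow]
    exact even_two_mul _

theorem Polynomial.irreducible_X_sq_sub_X_sub_C {F : Type*} [Field F] {a : F}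
    (ha : ∀ y : F, y ^ 2 - y ≠ a) : Irreducible (X ^ 2 - X - C a) := by
  have hdeg : (X ^ 2 - X - C a : F[X]).natDegree = 2 := by compute_degree!
  rw [irreducible_iff_roots_eq_zero_of_degree_le_three (by omega) (by omega),
    Multiset.eq_zero_iff_forall_notMem]
  intro y hy
  have hroot := (mem_roots (ne_zero_of_natDegree_gt (n := 0) (by omega))).mp hy
  simp only [IsRoot, eval_sub, eval_pow, eval_X, eval_C, sub_eq_zero] at hroot
  exact ha y hroot

theorem IsIntegrallyClosed.exists_sq_sub_self_eq {A K : Type*} [CommRing A] [IsDomain A]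
    [IsIntegrallyClosed A] [Field K] [Algebra A K] [IsFractionRing A K] {y : K} {a : A}
    (hy : y ^ 2 - y = algebraMap A K a) : ∃ f : A, f ^ 2 - f = a := by
  have hint : IsIntegral A y := by
    refine ⟨X ^ 2 - X - C a, ?_, ?_⟩
    · rw [sub_sub]
      refine monic_X_pow_sub (lt_of_le_of_lt (degree_add_le _ _) ?_)
      rw [degree_X]
      exact max_lt (by norm_num) (lt_of_le_of_lt degree_C_le (by norm_num))
    · simp only [eval₂_sub, eval₂_pow, eval₂_X, eval₂_C, hy, sub_self]
  obtain ⟨f, rfl⟩ := isIntegral_iff.mp hint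
  exact ⟨f, IsFractionRing.injective A K (by simpa using hy)⟩

theorem Polynomial.natDegree_X_pow_sub_X {R : Type*} [CommRing R] [Nontrivial R] {n : ℕ}
    (hn : 2 ≤ n) : (X ^ n - X : R[X]).natDegree = n := by
  rw [natDegree_sub_eq_left_of_natDegree_lt (by simp; omega), natDegree_X_pow]

/-- For `p` an odd prime, the polynomial `Y² - Y - (T^p - T)` is irreducible
over `𝔽_p(T)`, yet for every `t₀ ∈ 𝔽_p` the specialized polynomial
`Y² - Y - (t₀^p - t₀) ∈ 𝔽_p[Y]` splits into linear factors over `𝔽_p`: indeed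
`t₀^p - t₀ = 0`, so it equals `Y(Y - 1)`. -/
theorem artinSchreier_example_irreducible_but_splits_at_all_points
    (p : ℕ) [Fact p.Prime] (hodd : Odd p) :
    Irreducible
      (Polynomial.X ^ 2 - Polynomial.X -
        Polynomial.C ((RatFunc.X : RatFunc (ZMod p)) ^ p - RatFunc.X)) ∧
    ∀ t₀ : ZMod p,
      (Polynomial.X ^ 2 - Polynomial.X - Polynomial.C (t₀ ^ p - t₀) :
          Polynomial (ZMod p)).Splits ∧
      (Polynomial.X ^ 2 - Polynomial.X - Polynomial.C (t₀ ^ p - t₀) :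
          Polynomial (ZMod p)) =
        Polynomial.X * (Polynomial.X - 1) := by
  refine ⟨irreducible_X_sq_sub_X_sub_C fun y hy ↦ ?_, fun t₀ ↦ ?_⟩
  · have hy' : y ^ 2 - y = algebraMap (ZMod p)[X] _ (X ^ p - X) := by
      simpa [RatFunc.algebraMap_X] using hy
    obtain ⟨f, hf⟩ := IsIntegrallyClosed.exists_sq_sub_self_eq hy'
    have heven := f.even_natDegree_sq_sub_self
    rw [hf, natDegree_X_pow_sub_X (Fact.out : p.Prime).two_le] at heven
    exact Nat.not_even_iff_odd.mpr hodd heven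
  · have hspec : (X ^ 2 - X - C (t₀ ^ p - t₀) : (ZMod p)[X]) = X * (X - 1) := by
      rw [ZMod.pow_card, sub_self, C_0]
      ring
    refine ⟨?_, hspec⟩
    rw [hspec, ← C_1]
    exact Splits.X.mul (Splits.X_sub_C 1)
end
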